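/- For all patterns p and p' for which the join p ⊔ p' exists, the relation ≡_{p ⊔ p'} equals the intersection of ≡_p and ≡_{p'}: for all values v, v', v ≡_{p ⊔ p'} v' if and only if v ≡_p v' and v ≡_{p'} v'. -/

import Mathlib

/-!
Both inclusions go by induction on the derivation of the join. The constructor cases are
componentwise; the only real content is in the wildcard cases, where `≡_{p[◇/□]}` is `≡_p`
restricted to the diagonal, i.e. `≡_◇ ∩ ≡_p`.
-/

namespace Prov

abbrev Var := String

/-- Expressions of the call-by-value core calculus (needed for closures). -/
inductive Expr : Type where
  | var : Var → Expr
  | const : ℕ → Expr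
  | prim : String → List Expr → Expr
  | pair : Expr → Expr → Expr
  | fst : Expr → Expr
  | snd : Expr → Expr
  | inl : Expr → Expr
  | inr : Expr → Expr
  | case : Expr → Var → Expr → Var → Expr → Expr
  | fn : Var → Var → Expr → Expr
  | app : Expr → Expr → Expr
  | roll : Expr → Expr
  | unroll : Expr → Expr
  | letin : Var → Expr → Expr → Expr

/-- Values; closures `⟨fun f(x).e, γ⟩` record an environment. -/
inductive Val : Type where
  | const : ℕ → Val
  | pair : Val → Val → Val
  | inl : Val → Val
  | inr : Val → Val
  | roll : Val → Val
  | closure : Var → Var → Expr → (Var → Val) → Val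

abbrev Env := Var → Val

/-- Patterns (partial values): the hole `□`, the wildcard `◇`, constants, pairs,
constructor patterns (`inl`, `inr`, `roll`) and closure patterns `⟨κ, ρ⟩` with an
environment of patterns. -/
inductive Pat : Type where
  | hole : Pat
  | wild : Pat
  | const : ℕ → Pat
  | pair : Pat → Pat → Pat
  | inl : Pat → Pat
  | inr : Pat → Pat
  | roll : Pat → Pat
  | closure : Var → Var → Expr → (Var → Pat) → Pat

/-- `p[◇/□]`: replace every hole `□` in `p` by the wildcard `◇`. -/
def substHole : Pat → Pat
  | .hole => .wild
  | .wild => .wild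
  | .const c => .const c
  | .pair p1 p2 => .pair (substHole p1) (substHole p2)
  | .inl p => .inl (substHole p)
  | .inr p => .inr (substHole p)
  | .roll p => .roll (substHole p)
  | .closure f x e ρ => .closure f x e (fun y => substHole (ρ y))

/-- `v ≡_p v'`: the values `v` and `v'` agree according to the pattern `p`.
`≡_□` is total, `≡_◇` is the identity, and structured patterns are matched
componentwise (closure patterns pointwise on the environments). -/
inductive Agree : Pat → Val → Val → Prop where
  | hole : Agree .hole v v'
  | wild : Agree .wild v v
  | const : Agree (.const c) (.const c) (.const c)
  | pair : Agree p1 v1 w1 → Agree p2 v2 w2 →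
      Agree (.pair p1 p2) (.pair v1 v2) (.pair w1 w2)
  | inl : Agree p v w → Agree (.inl p) (.inl v) (.inl w)
  | inr : Agree p v w → Agree (.inr p) (.inr v) (.inr w)
  | roll : Agree p v w → Agree (.roll p) (.roll v) (.roll w)
  | closure : (∀ y, Agree (ρ y) (γ y) (γ' y)) →
      Agree (.closure f x e ρ) (.closure f x e γ) (.closure f x e γ')

/-- The partial join `p ⊔ p'` of patterns, as a relation `Join p p' (p ⊔ p')`;
undefined (no rule) on structurally incompatible patterns. -/
inductive Join : Pat → Pat → Pat → Prop where
  | holeL : Join .hole p p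
  | holeR : Join p .hole p
  | wildL : Join .wild p (substHole p)
  | wildR : Join p .wild (substHole p)
  | const : Join (.const c) (.const c) (.const c)
  | pair : Join p1 q1 r1 → Join p2 q2 r2 →
      Join (.pair p1 p2) (.pair q1 q2) (.pair r1 r2)
  | inl : Join p q r → Join (.inl p) (.inl q) (.inl r)
  | inr : Join p q r → Join (.inr p) (.inr q) (.inr r)
  | roll : Join p q r → Join (.roll p) (.roll q) (.roll r)
  | closure : (∀ y, Join (ρ y) (ρ' y) (ρ'' y)) →
      Join (.closure f x e ρ) (.closure f x e ρ') (.closure f x e ρ'')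

section

variable {p p' q : Pat} {v v' : Val}

theorem Agree.eq_of_substHole (h : Agree (substHole p) v v') : v = v' := by
  induction p generalizing v v' with
  | hole | wild => cases h; rfl
  | const => cases h; rfl
  | pair _ _ ih₁ ih₂ => cases h with | pair h₁ h₂ => rw [ih₁ h₁, ih₂ h₂]
  | inl _ ih => cases h with | inl h => rw [ih h]
  | inr _ ih => cases h with | inr h => rw [ih h]
  | roll _ ih => cases h with | roll h => rw [ih h]
  | closure _ _ _ _ ih => cases h with | closure h => rw [funext fun y => ih y (h y)]

theorem Agree.of_substHole (h : Agree (substHole p) v v') : Agree p v v' := by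
  induction p generalizing v v' with
  | hole => exact .hole
  | wild => exact h
  | const => exact h
  | pair _ _ ih₁ ih₂ => cases h with | pair h₁ h₂ => exact .pair (ih₁ h₁) (ih₂ h₂)
  | inl _ ih => cases h with | inl h => exact .inl (ih h)
  | inr _ ih => cases h with | inr h => exact .inr (ih h)
  | roll _ ih => cases h with | roll h => exact .roll (ih h)
  | closure _ _ _ _ ih => cases h with | closure h => exact .closure fun y => ih y (h y)

theorem Agree.substHole_self (h : Agree p v v) : Agree (substHole p) v v := by
  induction p generalizing v with
  | hole | wild => exact .wild
  | const => exact h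
  | pair _ _ ih₁ ih₂ => cases h with | pair h₁ h₂ => exact .pair (ih₁ h₁) (ih₂ h₂)
  | inl _ ih => cases h with | inl h => exact .inl (ih h)
  | inr _ ih => cases h with | inr h => exact .inr (ih h)
  | roll _ ih => cases h with | roll h => exact .roll (ih h)
  | closure _ _ _ _ ih => cases h with | closure h => exact .closure fun y => ih y (h y)

theorem Join.symm (hj : Join p p' q) : Join p' p q := by
  induction hj with
  | holeL => exact .holeR
  | holeR => exact .holeL
  | wildL => exact .wildR
  | wildR => exact .wildL
  | const => exact .const
  | pair _ _ ih₁ ih₂ => exact .pair ih₁ ih₂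
  | inl _ ih => exact .inl ih
  | inr _ ih => exact .inr ih
  | roll _ ih => exact .roll ih
  | closure _ ih => exact .closure ih

theorem Agree.of_join_left (hj : Join p p' q) (h : Agree q v v') : Agree p v v' := by
  induction hj generalizing v v' with
  | holeL => exact .hole
  | holeR | const => exact h
  | wildL => rw [h.eq_of_substHole]; exact .wild
  | wildR => exact h.of_substHole
  | pair _ _ ih₁ ih₂ => cases h with | pair h₁ h₂ => exact .pair (ih₁ h₁) (ih₂ h₂)
  | inl _ ih => cases h with | inl h => exact .inl (ih h)
  | inr _ ih => cases h with | inr h => exact .inr (ih h)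
  | roll _ ih => cases h with | roll h => exact .roll (ih h)
  | closure _ ih => cases h with | closure h => exact .closure fun y => ih y (h y)

theorem Agree.of_join_right (hj : Join p p' q) (h : Agree q v v') : Agree p' v v' :=
  h.of_join_left hj.symm

theorem Agree.join (hj : Join p p' q) (h : Agree p v v') (h' : Agree p' v v') :
    Agree q v v' := by
  induction hj generalizing v v' with
  | holeL => exact h'
  | holeR | const => exact h
  | wildL => cases h; exact h'.substHole_self
  | wildR => cases h'; exact h.substHole_self
  | pair _ _ ih₁ ih₂ =>
    cases h with | pair h₁ h₂ => cases h' with | pair h₁' h₂' =>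
    exact .pair (ih₁ h₁ h₁') (ih₂ h₂ h₂')
  | inl _ ih => cases h with | inl h => cases h' with | inl h' => exact .inl (ih h h')
  | inr _ ih => cases h with | inr h => cases h' with | inr h' => exact .inr (ih h h')
  | roll _ ih => cases h with | roll h => cases h' with | roll h' => exact .roll (ih h h')
  | closure _ ih =>
    cases h with | closure h => cases h' with | closure h' =>
    exact .closure fun y => ih y (h y) (h' y)

end

/-- For all patterns `p, p'` whose join `p ⊔ p'` exists,
`(≡_{p ⊔ p'}) = (≡_p) ∩ (≡_{p'})`. -/
theorem agree_join (p p' q : Pat) (hj : Join p p' q) (v v' : Val) :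
    Agree q v v' ↔ (Agree p v v' ∧ Agree p' v v') :=
  ⟨fun h => ⟨h.of_join_left hj, h.of_join_right hj⟩, fun ⟨h, h'⟩ => h.join hj h'⟩

end Prov
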